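/- Let W be normally distributed with mean μ and variance 1. Then for all t ∈ ℝ, the characteristic function of W² satisfies E[e^{itW²}] = (1 − 2it)^{−1/2} exp( itμ²/(1 − 2it) ), i.e., W² has a noncentral chi-square distribution with 1 degree of freedom and noncentrality μ². -/

import Mathlib

/-!
Integrating `exp (c x²)` against the `N(μ, v)` density is the Gaussian integral of
`exp (b x² + μ x / v - μ² / (2v))` with complex coefficient `b = -(1 - 2vc) / (2v)`. Completing the
square gives the factor `exp (c μ² / (1 - 2vc))`, and the normalisation `(π / -b) ^ (1/2) / √(2πv)`
is the principal `(1 - 2vc) ^ (-1/2)` because `Re (1 - 2vc) > 0` keeps `1 - 2vc` off the branch cut.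
For `W ~ N(μ, 1)` take `v = 1`, `c = it`.
-/

open MeasureTheory ProbabilityTheory Real Set
open scoped NNReal

namespace Complex

/-- No branch correction is needed since `log (a z) = log a + log z` for `a > 0`. -/
lemma ofReal_mul_cpow {a : ℝ} (ha : 0 < a) {z : ℂ} (hz : z ≠ 0) (r : ℂ) :
    ((a : ℂ) * z) ^ r = (a : ℂ) ^ r * z ^ r := by
  have ha' : (a : ℂ) ≠ 0 := ofReal_ne_zero.mpr ha.ne'
  rw [cpow_def_of_ne_zero (mul_ne_zero ha' hz), log_ofReal_mul ha hz, ofReal_log ha.le, add_mul,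
    exp_add, ← cpow_def_of_ne_zero ha', ← cpow_def_of_ne_zero hz]

lemma ofReal_cpow_one_half {a : ℝ} (ha : 0 ≤ a) : (a : ℂ) ^ (1 / 2 : ℂ) = √a := by
  rw [Real.sqrt_eq_rpow, ofReal_cpow ha]
  norm_num

end Complex

open Complex in
theorem integral_cexp_mul_sq_gaussianReal (μ : ℝ) {v : ℝ≥0} (hv : v ≠ 0) {c : ℂ}
    (hc : 0 < (1 - 2 * v * c).re) :
    ∫ x, cexp (c * x ^ 2) ∂gaussianReal μ v =
      (1 - 2 * v * c) ^ (-(1 / 2) : ℂ) * cexp (c * μ ^ 2 / (1 - 2 * v * c)) := by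
  set z : ℂ := 1 - 2 * v * c with hz_def
  have hv0 : (0 : ℝ) < v := NNReal.coe_pos.mpr (pos_iff_ne_zero.mpr hv)
  have hz : z ≠ 0 := fun h => by simp [h] at hc
  have hvC : ((v : ℝ) : ℂ) ≠ 0 := ofReal_ne_zero.mpr hv0.ne'
  have hb : (-z / (2 * v)).re < 0 := by
    rw [show (2 * (v : ℂ)) = ((2 * v : ℝ) : ℂ) by push_cast; ring, div_ofReal_re, neg_re]
    exact div_neg_of_neg_of_pos (neg_neg_of_pos hc) (by positivity)
  have hz_arg : z.arg ≠ π := fun h => (arg_eq_pi_iff.mp h).1.not_gt hc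
  have h2πv : (0 : ℝ) < 2 * π * v := by positivity
  calc ∫ x, cexp (c * x ^ 2) ∂gaussianReal μ v
    _ = ∫ x : ℝ, gaussianPDFReal μ v x * cexp (c * x ^ 2) := by
      simp_rw [integral_gaussianReal_eq_integral_smul hv, Complex.real_smul]
    _ = (√(2 * π * v))⁻¹ *
          ∫ x : ℝ, cexp (-z / (2 * v) * x ^ 2 + (μ / v) * x + -μ ^ 2 / (2 * v)) := by
      unfold gaussianPDFReal
      push_cast
      simp_rw [mul_assoc, integral_const_mul, ← Complex.exp_add]
      congr with x
      congr 1
      field_simp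
      ring
    _ = (√(2 * π * v))⁻¹ * (π / -(-z / (2 * v))) ^ (1 / 2 : ℂ) *
          cexp (-μ ^ 2 / (2 * v) - (μ / v) ^ 2 / (4 * (-z / (2 * v)))) := by
      rw [integral_cexp_quadratic hb, ← mul_assoc]
    _ = z ^ (-(1 / 2) : ℂ) * cexp (c * μ ^ 2 / z) := by
      have hπz : (π : ℂ) / -(-z / (2 * v)) = ((2 * π * v : ℝ) : ℂ) * z⁻¹ := by
        push_cast; field_simp
      have hexp : -μ ^ 2 / (2 * v) - (μ / v) ^ 2 / (4 * (-z / (2 * v))) = c * μ ^ 2 / z := by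
        field_simp
        rw [hz_def]
        ring
      rw [hπz, hexp, ofReal_mul_cpow h2πv (inv_ne_zero hz), inv_cpow _ _ hz_arg,
        ofReal_cpow_one_half h2πv.le, cpow_neg, ofReal_inv,
        inv_mul_cancel_left₀ (ofReal_ne_zero.mpr (sqrt_pos.mpr h2πv).ne')]

theorem charFun_sq_gaussian_general
    {Ω : Type*} [MeasurableSpace Ω] (P : Measure Ω)
    (W : Ω → ℝ) (hW : Measurable W) (μ : ℝ)
    (hlaw : Measure.map W P = gaussianReal μ 1) :
    ∀ t : ℝ,
      ∫ ω, Complex.exp ((t : ℂ) * ((W ω : ℝ) : ℂ) ^ 2 * Complex.I) ∂P =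
        (1 - 2 * Complex.I * (t : ℂ)) ^ (-(1 / 2) : ℂ) *
          Complex.exp (Complex.I * (t : ℂ) * (μ : ℂ) ^ 2 /
            (1 - 2 * Complex.I * (t : ℂ))) := by
  intro t
  have hlaw_integral : ∫ ω, Complex.exp ((t : ℂ) * ((W ω : ℝ) : ℂ) ^ 2 * Complex.I) ∂P =
      ∫ x, Complex.exp (Complex.I * t * x ^ 2) ∂gaussianReal μ 1 := by
    rw [← hlaw, integral_map hW.aemeasurable (by fun_prop)]
    simp_rw [mul_comm _ Complex.I, mul_assoc]
  have hgauss := integral_cexp_mul_sq_gaussianReal μ one_ne_zero (c := Complex.I * t) (by simp)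
  rw [hlaw_integral, hgauss]
  simp only [NNReal.coe_one, Complex.ofReal_one, mul_one, mul_assoc]

/-- If `W ~ N(μ, 1)`, then for all `t ∈ ℝ` the characteristic
function of `W²` is `E[e^{itW²}] = (1 − 2it)^{−1/2} exp(itμ²/(1 − 2it))`, i.e. `W²`
is noncentral chi-square with one degree of freedom and noncentrality `μ²`. -/
theorem charFun_sq_gaussian
    {Ω : Type*} [MeasurableSpace Ω] (P : Measure Ω) [IsProbabilityMeasure P]
    (W : Ω → ℝ) (hW : Measurable W) (μ : ℝ)
    (hlaw : Measure.map W P = gaussianReal μ 1) :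
    ∀ t : ℝ,
      ∫ ω, Complex.exp ((t : ℂ) * ((W ω : ℝ) : ℂ) ^ 2 * Complex.I) ∂P =
        (1 - 2 * Complex.I * (t : ℂ)) ^ (-(1 / 2) : ℂ) *
          Complex.exp (Complex.I * (t : ℂ) * (μ : ℂ) ^ 2 /
            (1 - 2 * Complex.I * (t : ℂ))) :=
  charFun_sq_gaussian_general P W hW μ hlaw
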